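/- Let b, i, j be integers with 0 ≤ i < j ≤ b and j ≥ 1. Then the function g_{j,i} satisfies: (1) for every odd integer ℓ ≥ 1, g_{j,i}(ℓ) ≥ g_{j,i}(ℓ+1); and (2) for every odd integer ℓ > 2i, g_{j,i}(ℓ) ≥ g_{j,i}(ℓ+r) for every integer r ≥ 0. -/

import Mathlib

open Finset
open scoped Classical

/-- `h_{j,i}(ℓ) = (b^{j+i−ℓ}/(b−1)^{j−i})·C(j−i−1, ℓ−2i)`, for integers `0 ≤ i < j`, `ℓ ∈ ℤ`. -/
noncomputable def hFun (b j i : ℕ) (l : ℤ) : ℝ :=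
  ((b : ℝ) ^ ((j : ℤ) + (i : ℤ) - l) / ((b : ℝ) - 1) ^ (j - i)) *
    (Nat.choose (j - i - 1) (l - 2 * (i : ℤ)).toNat : ℝ)

/-- `g_{j,i}(ℓ)`: `0` if `ℓ ≤ 2i`; `(b/(b−1))^{j−i−1}` if `ℓ = 2i+1`;
`1 + h_{j,i}(ℓ)` if `2i+1 < ℓ < j+i` and `ℓ` is odd; `1` otherwise
(i.e. if `ℓ ≥ i+j`, or `ℓ > 2i` and `ℓ` is even). -/
noncomputable def gFun (b j i : ℕ) (l : ℤ) : ℝ :=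
  if l ≤ 2 * (i : ℤ) then 0
  else if l = 2 * (i : ℤ) + 1 then ((b : ℝ) / ((b : ℝ) - 1)) ^ (j - i - 1)
  else if Odd l ∧ l < (j : ℤ) + (i : ℤ) then 1 + hFun b j i l
  else 1

/-- `G(m,s,J,k,d) := Σ_{I ⊊ J} g_{|J|,|I|}(m − |k|_{I*} − |d|_J)`, where `I* = I ∪ Jᶜ`. -/
noncomputable def GFun (b s : ℕ) (J : Finset (Fin s)) (m : ℕ) (k d : Fin s → ℕ) : ℝ :=
  ∑ I ∈ J.powerset.filter (· ≠ J),
    gFun b J.card I.card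
      ((m : ℤ) - ∑ j ∈ I ∪ Jᶜ, (k j : ℤ) - ∑ j ∈ J, (d j : ℤ))

/-!
Above `2i`, `g` equals `1` at even arguments and `1 + h` at odd ones below `i + j`, and `h` is
antitone: shifting `ℓ` by one divides the power of `b` by `b` and multiplies the binomial
coefficient by at most `j - i - 1 ≤ b`. The only comparison left is `g(2i+1) ≥ 1 + h(2i+3)`;
with `x = 1/(b-1)` and `n = j - i - 1` it reads `1 + C(n,3) x³ (1+x)^(n-2) ≤ (1+x)^n` under `n x ≤ 1`.
This follows from `(1+x)^(n-2) ≤ e^(nx) ≤ 3`, `C(n,3) x³ ≤ (nx)³/6` and Bernoulli's inequality.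
-/

lemma Nat.choose_succ_le_mul (n k : ℕ) : n.choose (k + 1) ≤ n * n.choose k :=
  calc n.choose (k + 1) ≤ n.choose (k + 1) * (k + 1) := Nat.le_mul_of_pos_right _ k.succ_pos
    _ = n.choose k * (n - k) := Nat.choose_succ_right_eq n k
    _ ≤ n * n.choose k := by rw [mul_comm]; exact Nat.mul_le_mul_right _ (Nat.sub_le n k)

lemma Nat.choose_toNat_add_one_le {n b : ℕ} (hb : 1 ≤ b) (hn : n ≤ b) (z : ℤ) :
    n.choose (z + 1).toNat ≤ b * n.choose z.toNat := by
  rcases (by omega : (z + 1).toNat = z.toNat ∨ (z + 1).toNat = z.toNat + 1) with h | h <;> rw [h]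
  · exact Nat.le_mul_of_pos_left _ hb
  · exact (Nat.choose_succ_le_mul n _).trans (Nat.mul_le_mul_right _ hn)

lemma one_add_choose_three_mul_pow_le_pow {x : ℝ} (hx : 0 ≤ x) {n : ℕ} (hn : n * x ≤ 1) :
    1 + n.choose 3 * x ^ 3 * (1 + x) ^ (n - 2) ≤ (1 + x) ^ n := by
  have hnx : 0 ≤ n * x := by positivity
  have hpow : (1 + x) ^ (n - 2) ≤ 3 :=
    calc (1 + x) ^ (n - 2) ≤ (1 + x) ^ n := pow_le_pow_right₀ (by linarith) (Nat.sub_le n 2)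
      _ ≤ Real.exp x ^ n := pow_le_pow_left₀ (by linarith) (by linarith [Real.add_one_le_exp x]) n
      _ = Real.exp (n * x) := (Real.exp_nat_mul x n).symm
      _ ≤ Real.exp 1 := Real.exp_le_exp.mpr hn
      _ ≤ 3 := by linarith [Real.exp_one_lt_d9]
  have hchoose : (n.choose 3 : ℝ) ≤ n ^ 3 / 6 := by
    simpa [Nat.factorial] using Nat.choose_le_pow_div (α := ℝ) 3 n
  have hcube : (n * x) ^ 3 ≤ n * x := pow_le_of_le_one hnx hn (by norm_num)
  calc 1 + n.choose 3 * x ^ 3 * (1 + x) ^ (n - 2)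
      ≤ 1 + n ^ 3 / 6 * x ^ 3 * 3 := by gcongr
    _ = 1 + (n * x) ^ 3 / 2 := by ring
    _ ≤ 1 + n * x := by linarith
    _ ≤ (1 + x) ^ n := one_add_mul_le_pow (by linarith) n

section

variable {b j i : ℕ}

lemma hFun_nonneg (hb : 1 ≤ b) (l : ℤ) : 0 ≤ hFun b j i l := by
  have : (0 : ℝ) ≤ b - 1 := by simpa using (Nat.one_le_cast (α := ℝ)).mpr hb
  unfold hFun
  positivity

lemma hFun_add_one_le (hb : 1 ≤ b) (hjb : j - i - 1 ≤ b) (l : ℤ) :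
    hFun b j i (l + 1) ≤ hFun b j i l := by
  have hb0 : (0 : ℝ) < b := by exact_mod_cast hb
  have hb1 : (0 : ℝ) ≤ b - 1 := by linarith [(Nat.one_le_cast (α := ℝ)).mpr hb]
  have hchoose : (Nat.choose (j - i - 1) (l - 2 * i + 1).toNat : ℝ)
      ≤ b * Nat.choose (j - i - 1) (l - 2 * i).toNat := by
    exact_mod_cast Nat.choose_toNat_add_one_le hb hjb _
  unfold hFun
  rw [show (j : ℤ) + i - (l + 1) = j + i - l - 1 by ring, zpow_sub_one₀ hb0.ne',
    show l + 1 - 2 * (i : ℤ) = l - 2 * i + 1 by ring]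
  calc (b : ℝ) ^ ((j : ℤ) + i - l) * (b : ℝ)⁻¹ / ((b : ℝ) - 1) ^ (j - i)
        * (Nat.choose (j - i - 1) (l - 2 * i + 1).toNat : ℝ)
      = (b : ℝ) ^ ((j : ℤ) + i - l) / ((b : ℝ) - 1) ^ (j - i)
        * ((Nat.choose (j - i - 1) (l - 2 * i + 1).toNat : ℝ) / b) := by ring
    _ ≤ (b : ℝ) ^ ((j : ℤ) + i - l) / ((b : ℝ) - 1) ^ (j - i)
        * (Nat.choose (j - i - 1) (l - 2 * i).toNat : ℝ) := by
      gcongr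
      rw [div_le_iff₀ hb0]
      linarith

lemma hFun_antitone (hb : 1 ≤ b) (hjb : j - i - 1 ≤ b) : Antitone (hFun b j i) :=
  antitone_int_of_succ_le (hFun_add_one_le hb hjb)

lemma hFun_two_mul_add_three (hb : 1 < b) :
    hFun b j i (2 * i + 3) = (j - i - 1).choose 3 * ((b : ℝ) - 1)⁻¹ ^ 3
      * ((b : ℝ) / (b - 1)) ^ (j - i - 1 - 2) := by
  have hb1 : (b : ℝ) - 1 ≠ 0 := by
    have : (1 : ℝ) < b := by exact_mod_cast hb
    linarith
  unfold hFun
  rw [show (2 * i + 3 - 2 * i : ℤ).toNat = 3 by omega]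
  rcases Nat.lt_or_ge (j - i - 1) 3 with hn | hn
  · simp [Nat.choose_eq_zero_of_lt hn]
  · obtain ⟨m, hm⟩ : ∃ m, j - i - 1 = m + 3 := ⟨j - i - 1 - 3, by omega⟩
    rw [hm, show j - i = m + 4 by omega, show m + 3 - 2 = m + 1 by omega,
      show (j : ℤ) + i - (2 * i + 3) = ((m + 1 : ℕ) : ℤ) by omega, zpow_natCast, div_pow, inv_pow]
    field_simp
    ring

lemma one_add_hFun_two_mul_add_three_le (hb : 2 ≤ b) (hjb : j ≤ b) :
    1 + hFun b j i (2 * i + 3) ≤ ((b : ℝ) / (b - 1)) ^ (j - i - 1) := by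
  have hb1 : (1 : ℝ) ≤ b - 1 := by
    have : (2 : ℝ) ≤ b := by exact_mod_cast hb
    linarith
  have hx : ((b : ℝ) / (b - 1)) = 1 + ((b : ℝ) - 1)⁻¹ := by field_simp; ring
  have hn : ((j - i - 1 : ℕ) : ℝ) * ((b : ℝ) - 1)⁻¹ ≤ 1 := by
    rw [← div_eq_mul_inv, div_le_one (by linarith)]
    have : ((j - i - 1 : ℕ) : ℝ) + 1 ≤ b := by exact_mod_cast (by omega : j - i - 1 + 1 ≤ b)
    linarith
  rw [hFun_two_mul_add_three (by omega), hx]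
  exact one_add_choose_three_mul_pow_le_pow (by positivity) hn

lemma gFun_of_le_two_mul {l : ℤ} (hl : l ≤ 2 * i) : gFun b j i l = 0 := by
  simp [gFun, hl]

lemma gFun_of_two_mul_add_one_lt {l : ℤ} (hl : 2 * (i : ℤ) + 1 < l) :
    gFun b j i l = if Odd l ∧ l < (j : ℤ) + i then 1 + hFun b j i l else 1 := by
  rw [gFun, if_neg (by omega), if_neg (by omega)]

lemma gFun_nonneg (hb : 1 ≤ b) (l : ℤ) : 0 ≤ gFun b j i l := by
  have : (0 : ℝ) ≤ b - 1 := by simpa using (Nat.one_le_cast (α := ℝ)).mpr hb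
  unfold gFun
  split_ifs
  · exact le_rfl
  · positivity
  · linarith [hFun_nonneg (j := j) (i := i) hb l]
  · exact zero_le_one

lemma one_le_gFun (hb : 2 ≤ b) {l : ℤ} (hl : 2 * (i : ℤ) < l) : 1 ≤ gFun b j i l := by
  have hb1 : (0 : ℝ) < b - 1 := by
    have : (2 : ℝ) ≤ b := by exact_mod_cast hb
    linarith
  rw [gFun, if_neg (by omega)]
  split_ifs
  · exact one_le_pow₀ ((one_le_div hb1).mpr (by linarith))
  · linarith [hFun_nonneg (j := j) (i := i) (by omega : 1 ≤ b) l]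
  · exact le_rfl

lemma one_add_hFun_le_gFun (hb : 2 ≤ b) (hjb : j ≤ b) {l x : ℤ} (hl : 2 * (i : ℤ) < l)
    (hlo : Odd l) (hlx : l + 2 ≤ x) (hx : x < (j : ℤ) + i) :
    1 + hFun b j i x ≤ gFun b j i l := by
  have hanti := hFun_antitone (j := j) (i := i) (by omega : 1 ≤ b) (by omega)
  rcases eq_or_ne l (2 * i + 1) with rfl | hl1
  · rw [gFun, if_neg (by omega), if_pos rfl]
    calc 1 + hFun b j i x ≤ 1 + hFun b j i (2 * i + 3) := by gcongr; exact hanti (by omega)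
      _ ≤ _ := one_add_hFun_two_mul_add_three_le hb hjb
  · rw [gFun_of_two_mul_add_one_lt (by grind), if_pos ⟨hlo, by omega⟩]
    gcongr
    exact hanti (by omega)

lemma gFun_le_of_odd (hb : 2 ≤ b) (hjb : j ≤ b) {l x : ℤ} (hl : 2 * (i : ℤ) < l) (hlo : Odd l)
    (hlx : l ≤ x) : gFun b j i x ≤ gFun b j i l := by
  rcases hlx.eq_or_lt with rfl | hlx
  · exact le_rfl
  rw [gFun_of_two_mul_add_one_lt (by grind)]
  split_ifs with hx
  · obtain ⟨hxo, hxj⟩ := hx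
    exact one_add_hFun_le_gFun hb hjb hl hlo (by grind) hxj
  · exact one_le_gFun hb hl

end

theorem claim_g_monotone_general (b i j : ℕ) (hb : 2 ≤ b) (hjb : j ≤ b) :
    (∀ l : ℤ, 1 ≤ l → Odd l → gFun b j i (l + 1) ≤ gFun b j i l) ∧
    (∀ l : ℤ, 2 * (i : ℤ) < l → Odd l → ∀ r : ℤ, 0 ≤ r →
      gFun b j i (l + r) ≤ gFun b j i l) := by
  refine ⟨fun l _ hlo => ?_, fun l hl hlo r hr => gFun_le_of_odd hb hjb hl hlo (by omega)⟩
  by_cases hl : l + 1 ≤ 2 * i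
  · rw [gFun_of_le_two_mul hl]
    exact gFun_nonneg (by omega) l
  · have hl' : 2 * (i : ℤ) < l := by grind
    rw [gFun_of_two_mul_add_one_lt (by grind), if_neg (by grind)]
    exact one_le_gFun hb hl'

/-- For integers `b, i, j` with `0 ≤ i < j ≤ b` (and `j ≥ 1`):
(1) for every odd integer `ℓ ≥ 1`, `g_{j,i}(ℓ) ≥ g_{j,i}(ℓ+1)`, and
(2) for every odd integer `ℓ > 2i`, `g_{j,i}(ℓ) ≥ g_{j,i}(ℓ+r)` for every integer `r ≥ 0`. -/
theorem claim_g_monotone (b i j : ℕ) (hb : 2 ≤ b) (hij : i < j) (hjb : j ≤ b) (hj : 1 ≤ j) :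
    (∀ l : ℤ, 1 ≤ l → Odd l → gFun b j i (l + 1) ≤ gFun b j i l) ∧
    (∀ l : ℤ, 2 * (i : ℤ) < l → Odd l → ∀ r : ℤ, 0 ≤ r →
      gFun b j i (l + r) ≤ gFun b j i l) :=
  claim_g_monotone_general b i j hb hjb
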